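/- arXiv:math/0409182 — 7 statements merged into one kernel-verified Lean document; each statement's English description precedes it below -/
import Mathlib

section
/- A ring R has left and right local units (i.e., for every r ∈ R there exist e, f ∈ R with e·r = r and r·f = r) if and only if it has two-sided local units (for every r ∈ R there exists e ∈ R with e·r = r·e = r). -/
/-- A (possibly non-unital) ring has left and right local units if and only if it
has two-sided local units. -/
theorem stmt2 (R : Type) [NonUnitalRing R] :
    (∀ r : R, (∃ e : R, e * r = r) ∧ (∃ f : R, r * f = r)) ↔
      (∀ r : R, ∃ e : R, e * r = r ∧ r * e = r) := by
  constructor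
  · intro h r
    obtain ⟨⟨e, he⟩, ⟨f, hf⟩⟩ := h r
    refine ⟨e + f - f * e, ?_, ?_⟩
    · have : f * e * r = f * r := by rw [mul_assoc, he]
      simp [sub_mul, add_mul, he, this]
    · have : r * (f * e) = r * e := by rw [← mul_assoc, hf]
      simp [mul_sub, mul_add, hf, this]
  · intro h r
    obtain ⟨e, h1, h2⟩ := h r
    exact ⟨⟨e, h1⟩, ⟨e, h2⟩⟩
end

section
/- Let R be a ring with right local units (for every finite subset F ⊆ R there exists e ∈ R with f·e = f for all f ∈ F), and M a right R-module. Then M has right local units (every m ∈ M admits e ∈ R with m·e = m) if and only if M is firm, i.e., the multiplication map M ⊗_R R → M is an isomorphism. -/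
/-- The subgroup of relations defining the tensor product `M ⊗_R R` of a right
`R`-module `M` with `R` (over a possibly non-unital ring `R`). -/
def tensorRel3 (R M : Type) [NonUnitalRing R] [AddCommGroup M] (act : M → R → M) :
    AddSubgroup (FreeAbelianGroup (M × R)) :=
  AddSubgroup.closure
    ({x | ∃ m m' r, x = FreeAbelianGroup.of (m + m', r) - FreeAbelianGroup.of (m, r)
        - FreeAbelianGroup.of (m', r)} ∪
     {x | ∃ m r r', x = FreeAbelianGroup.of (m, r + r') - FreeAbelianGroup.of (m, r)
        - FreeAbelianGroup.of (m, r')} ∪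
     {x | ∃ m r r', x = FreeAbelianGroup.of (act m r, r') - FreeAbelianGroup.of (m, r * r')})

/-!
An element of `M ⊗_R R` is a finite sum `∑ mᵢ ⊗ rᵢ`. For a right local unit `e` of the finitely
many `rᵢ`, `mᵢ ⊗ rᵢ = mᵢ ⊗ rᵢ e = mᵢ rᵢ ⊗ e`, so the element equals `(∑ mᵢ rᵢ) ⊗ e`: it is
determined by its image under multiplication, which is therefore injective. Applied to a
preimage of `m`, the same identity shows that multiplication is onto exactly when every `m`
satisfies `m·e = m` for some `e`.
-/

namespace TensorRel3

open FreeAbelianGroup QuotientAddGroup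

variable {R M : Type} [AddCommGroup M] (act : M → R → M)

def mulMap : FreeAbelianGroup (M × R) →+ M :=
  lift fun p => act p.1 p.2

theorem mulMap_of (m : M) (r : R) : mulMap act (of (m, r)) = act m r :=
  lift_apply_of _ _

variable [NonUnitalRing R]

def tmul (m : M) (r : R) : FreeAbelianGroup (M × R) ⧸ tensorRel3 R M act :=
  mk (of (m, r))

theorem tmul_add_left (m m' : M) (r : R) :
    tmul act (m + m') r = tmul act m r + tmul act m' r := by
  rw [tmul, tmul, tmul, ← mk_add, QuotientAddGroup.eq_iff_sub_mem, ← sub_sub]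
  exact AddSubgroup.subset_closure (Or.inl (Or.inl ⟨m, m', r, rfl⟩))

theorem tmul_act (m : M) (r r' : R) : tmul act (act m r) r' = tmul act m (r * r') := by
  rw [tmul, tmul, QuotientAddGroup.eq_iff_sub_mem]
  exact AddSubgroup.subset_closure (Or.inr ⟨m, r, r', rfl⟩)

def tmulLeft (r : R) : M →+ FreeAbelianGroup (M × R) ⧸ tensorRel3 R M act :=
  AddMonoidHom.mk' (tmul act · r) fun m m' => tmul_add_left act m m' r

theorem tmul_zero_left (r : R) : tmul act 0 r = 0 :=
  map_zero (tmulLeft act r)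

theorem tmul_neg_left (m : M) (r : R) : tmul act (-m) r = -tmul act m r :=
  map_neg (tmulLeft act r) m

theorem exists_finset_mk_eq_tmul_mulMap (x : FreeAbelianGroup (M × R)) :
    ∃ F : Finset R, ∀ e : R, (∀ r ∈ F, r * e = r) →
      (mk x : FreeAbelianGroup (M × R) ⧸ tensorRel3 R M act) = tmul act (mulMap act x) e := by
  classical
  induction x using FreeAbelianGroup.induction_on with
  | zero => exact ⟨∅, fun e _ => by rw [map_zero, tmul_zero_left]; rfl⟩
  | of p =>
    refine ⟨{p.2}, fun e he => ?_⟩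
    rw [mulMap_of, tmul_act, he p.2 (Finset.mem_singleton_self _)]
    rfl
  | neg p ih =>
    obtain ⟨F, hF⟩ := ih
    refine ⟨F, fun e he => ?_⟩
    rw [mk_neg, hF e he, map_neg, tmul_neg_left]
  | add x y ihx ihy =>
    obtain ⟨Fx, hFx⟩ := ihx
    obtain ⟨Fy, hFy⟩ := ihy
    refine ⟨Fx ∪ Fy, fun e he => ?_⟩
    rw [mk_add, hFx e fun r hr => he r (Finset.mem_union_left _ hr),
      hFy e fun r hr => he r (Finset.mem_union_right _ hr), map_add, tmul_add_left]

theorem le_ker_mulMap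
    (act_addl : ∀ m m' r, act (m + m') r = act m r + act m' r)
    (act_addr : ∀ m r r', act m (r + r') = act m r + act m r')
    (act_mul : ∀ m r r', act m (r * r') = act (act m r) r') :
    tensorRel3 R M act ≤ (mulMap act).ker := by
  rw [tensorRel3, AddSubgroup.closure_le]
  rintro x ((⟨m, m', r, rfl⟩ | ⟨m, r, r', rfl⟩) | ⟨m, r, r', rfl⟩) <;>
    simp [AddMonoidHom.mem_ker, mulMap, act_addl, act_addr, act_mul]

theorem injective_lift_mulMap (hR : ∀ F : Finset R, ∃ e : R, ∀ f ∈ F, f * e = f)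
    (hker : tensorRel3 R M act ≤ (mulMap act).ker) :
    Function.Injective (QuotientAddGroup.lift _ (mulMap act) hker) := by
  classical
  intro a b hab
  obtain ⟨x, rfl⟩ := mk_surjective a
  obtain ⟨y, rfl⟩ := mk_surjective b
  rw [lift_mk', lift_mk'] at hab
  obtain ⟨Fx, hFx⟩ := exists_finset_mk_eq_tmul_mulMap act x
  obtain ⟨Fy, hFy⟩ := exists_finset_mk_eq_tmul_mulMap act y
  obtain ⟨e, he⟩ := hR (Fx ∪ Fy)
  rw [hFx e fun r hr => he r (Finset.mem_union_left _ hr),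
    hFy e fun r hr => he r (Finset.mem_union_right _ hr), hab]

theorem exists_act_eq_self_of_surjective (hR : ∀ F : Finset R, ∃ e : R, ∀ f ∈ F, f * e = f)
    (φ : (FreeAbelianGroup (M × R) ⧸ tensorRel3 R M act) →+ M)
    (hφ : ∀ m r, φ (tmul act m r) = act m r) (hsurj : Function.Surjective φ) (m : M) :
    ∃ e : R, act m e = m := by
  have hφ_mk : φ.comp (mk' _) = mulMap act :=
    lift_ext _ _ fun p => (hφ p.1 p.2).trans (mulMap_of act p.1 p.2).symm
  obtain ⟨q, rfl⟩ := hsurj m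
  obtain ⟨x, rfl⟩ := mk_surjective q
  obtain ⟨F, hF⟩ := exists_finset_mk_eq_tmul_mulMap act x
  obtain ⟨e, he⟩ := hR F
  have hx : φ (mk x) = mulMap act x := DFunLike.congr_fun hφ_mk x
  refine ⟨e, ?_⟩
  rw [hx, ← hφ, ← hF e he, hx]

end TensorRel3

/-- Let `R` be a ring with right local units and `M` a right `R`-module.  Then `R`
has right local units on `M` if and only if `M` is firm, i.e. the canonical map
`M ⊗_R R → M`, `m ⊗ r ↦ m·r`, is bijective. -/
theorem stmt3 (R M : Type) [NonUnitalRing R] [AddCommGroup M]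
    (act : M → R → M)
    (act_addl : ∀ m m' r, act (m + m') r = act m r + act m' r)
    (act_addr : ∀ m r r', act m (r + r') = act m r + act m r')
    (act_mul : ∀ m r r', act m (r * r') = act (act m r) r')
    (hR : ∀ F : Finset R, ∃ e : R, ∀ f ∈ F, f * e = f) :
    (∀ m : M, ∃ e : R, act m e = m) ↔
      ∃ φ : (FreeAbelianGroup (M × R) ⧸ tensorRel3 R M act) →+ M,
        (∀ m r, φ (QuotientAddGroup.mk (FreeAbelianGroup.of (m, r))) = act m r) ∧
        Function.Bijective φ := by
  refine ⟨fun hM => ?_, fun ⟨φ, hφ, hbij⟩ =>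
    TensorRel3.exists_act_eq_self_of_surjective act hR φ hφ hbij.2⟩
  have hker := TensorRel3.le_ker_mulMap act act_addl act_addr act_mul
  refine ⟨QuotientAddGroup.lift _ (TensorRel3.mulMap act) hker, fun m r => ?_,
    TensorRel3.injective_lift_mulMap act hR hker, fun m => ?_⟩
  · exact TensorRel3.mulMap_of act m r
  · obtain ⟨e, he⟩ := hM m
    exact ⟨TensorRel3.tmul act m e, (TensorRel3.mulMap_of act m e).trans he⟩
end

section
/- If a ring R has left idempotent local units and right idempotent local units, then R has two-sided idempotent local units: for every finite subset {r₁,...,r_k} ⊆ R there exists an idempotent e ∈ R with e·r_i = r_i·e = r_i for all i. Explicitly, if e' is an idempotent left local unit on {r₁,...,r_k} and e'' an idempotent right local unit on {r₁,...,r_k, e'}, then e = e' + e'' − e''e' works. -/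
lemma aux5 {R : Type} [NonUnitalRing R] (F : Finset R) (a b : R)
    (ha : a * a = a) (hal : ∀ r ∈ F, a * r = r)
    (hb : b * b = b) (hbr : ∀ r ∈ F, r * b = r) (hab : a * b = a) :
    (a + b - b * a) * (a + b - b * a) = (a + b - b * a) ∧
      ∀ r ∈ F, (a + b - b * a) * r = r ∧ r * (a + b - b * a) = r := by
  constructor
  · have h1 : a * (b * a) = a := by rw [← mul_assoc, hab, ha]
    have h2 : b * (b * a) = b * a := by rw [← mul_assoc, hb]
    have h3 : (b * a) * a = b * a := by rw [mul_assoc, ha]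
    have h4 : (b * a) * b = b * a := by rw [mul_assoc, hab]
    have h5 : (b * a) * (b * a) = b * a := by rw [mul_assoc, ← mul_assoc a, hab, ha]
    simp only [sub_mul, mul_sub, add_mul, mul_add, ha, hb, hab, h1, h2, h3, h4, h5]
    abel
  · intro r hr
    have h1 := hal r hr
    have h2 := hbr r hr
    constructor
    · rw [sub_mul, add_mul, h1, mul_assoc, h1]; abel
    · rw [mul_sub, mul_add, h2, ← mul_assoc, h2]; abel

/-- A ring with left idempotent local units and right idempotent local units has
two-sided idempotent local units; explicitly, if `e'` is an idempotent left local
unit on `{r₁,…,r_k}` and `e''` an idempotent right local unit on `{r₁,…,r_k,e'}`,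
then `e = e' + e'' - e''e'` is an idempotent two-sided local unit on `{r₁,…,r_k}`. -/
theorem stmt5 (R : Type) [NonUnitalRing R]
    (hl : ∀ F : Finset R, ∃ e : R, e * e = e ∧ ∀ r ∈ F, e * r = r)
    (hr : ∀ F : Finset R, ∃ e : R, e * e = e ∧ ∀ r ∈ F, r * e = r) :
    (∀ F : Finset R, ∃ e : R, e * e = e ∧ ∀ r ∈ F, e * r = r ∧ r * e = r) ∧
    (∀ (F : Finset R) (e' e'' : R), e' * e' = e' → (∀ r ∈ F, e' * r = r) →
      e'' * e'' = e'' → (∀ r ∈ F, r * e'' = r) → e' * e'' = e' →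
      (e' + e'' - e'' * e') * (e' + e'' - e'' * e') = (e' + e'' - e'' * e') ∧
      ∀ r ∈ F, (e' + e'' - e'' * e') * r = r ∧ r * (e' + e'' - e'' * e') = r) := by
  refine ⟨?_, fun F a b ha hal hb hbr hab => aux5 F a b ha hal hb hbr hab⟩
  intro F
  classical
  obtain ⟨a, ha, hal⟩ := hl F
  obtain ⟨b, hb, hbr'⟩ := hr (insert a F)
  have hab : a * b = a := hbr' a (Finset.mem_insert_self a F)
  have hbr : ∀ r ∈ F, r * b = r := fun r h => hbr' r (Finset.mem_insert_of_mem h)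
  exact ⟨a + b - b * a, aux5 F a b ha hal hb hbr hab⟩
end

section
/- Let A be a ring with unit and P a right A-module. The following are equivalent: (1) every finitely generated submodule F of P is contained in a finitely generated projective submodule P_F which is a direct summand of P; (2) every finite subset of P admits an idempotent dual basis, i.e., a finite set {(u_i, f_i)} ⊆ P × Hom_A(P, A) with n = Σ u_i f_i(n) for all n in the subset and u_i = Σ_j u_j f_j(u_i) for all i. -/
/-!
A finitely generated projective direct summand `Q` of `M` has a finite dual basis: split a
surjection `π : Rᵏ → Q` by `s`, put `uᵢ = π eᵢ` and `fᵢ = (s ∘ p)ᵢ` with `p` the projection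
onto `Q`; it is idempotent because every `uᵢ` lies in `Q`. Conversely, for an idempotent dual
basis `(u, f)` the map `x ↦ ∑ fᵢ(x) uᵢ` is a projection of `M` onto `span u`, which is therefore
a direct summand, and a retract of `Rᵏ` through `f` and `u`, hence projective.
-/

open MulOpposite

namespace Module

variable {R M : Type*} [Ring R] [AddCommGroup M] [Module R M] {ι : Type*} [Fintype ι]

/-- An idempotent dual basis in the usual sense is one with `IsDualBasisOn u f (Set.range u)`. -/
def IsDualBasisOn (u : ι → M) (f : ι → Dual R M) (N : Set M) : Prop :=
  ∀ n ∈ N, ∑ i, f i n • u i = n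

variable (R) in
def linearCombinationToSpan (u : ι → M) : (ι → R) →ₗ[R] Submodule.span R (Set.range u) :=
  (Fintype.linearCombination R u).codRestrict _ fun c =>
    (Submodule.mem_span_range_iff_exists_fun R).2 ⟨c, rfl⟩

@[simp]
theorem coe_linearCombinationToSpan_apply (u : ι → M) (c : ι → R) :
    (linearCombinationToSpan R u c : M) = ∑ i, c i • u i :=
  Fintype.linearCombination_apply R u c

namespace IsDualBasisOn

variable {u : ι → M} {f : ι → Dual R M} {N N' : Set M}

theorem mono (h : IsDualBasisOn u f N) (hN' : N' ⊆ N) : IsDualBasisOn u f N' :=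
  fun n hn => h n (hN' hn)

theorem span (h : IsDualBasisOn u f N) : IsDualBasisOn u f (Submodule.span R N) := by
  intro n hn
  induction hn using Submodule.span_induction with
  | mem x hx => exact h x hx
  | zero => simp
  | add x y _ _ hx hy => simp only [map_add, add_smul, Finset.sum_add_distrib, hx, hy]
  | smul c x _ hx => simp only [map_smul, smul_eq_mul, mul_smul, ← Finset.smul_sum, hx]

theorem subset_span_range (h : IsDualBasisOn u f N) : N ⊆ Submodule.span R (Set.range u) :=
  fun n hn => (Submodule.mem_span_range_iff_exists_fun R).2 ⟨_, h n hn⟩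

theorem linearCombinationToSpan_pi (h : IsDualBasisOn u f (Set.range u))
    (x : Submodule.span R (Set.range u)) : linearCombinationToSpan R u (LinearMap.pi f x) = x :=
  Subtype.ext <| by simpa using h.span x x.2

theorem exists_isCompl_span_range (h : IsDualBasisOn u f (Set.range u)) :
    ∃ Q', IsCompl (Submodule.span R (Set.range u)) Q' :=
  ⟨_, LinearMap.isCompl_of_proj (f := linearCombinationToSpan R u ∘ₗ LinearMap.pi f)
    h.linearCombinationToSpan_pi⟩

theorem projective_span_range (h : IsDualBasisOn u f (Set.range u)) :
    Projective R (Submodule.span R (Set.range u)) :=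
  .of_split (LinearMap.pi f ∘ₗ Submodule.subtype _) (linearCombinationToSpan R u) <|
    LinearMap.ext h.linearCombinationToSpan_pi

end IsDualBasisOn

variable (R) in
theorem exists_isDualBasisOn_of_isCompl {Q Q' : Submodule R M} (hQ : IsCompl Q Q')
    [Module.Finite R Q] [Projective R Q] :
    ∃ (k : ℕ) (u : Fin k → M) (f : Fin k → Dual R M), Set.range u ⊆ Q ∧ IsDualBasisOn u f Q := by
  obtain ⟨k, π, s, -, -, hπs⟩ := Module.Finite.exists_comp_eq_id_of_projective R Q
  refine ⟨k, fun i => π (Pi.single i 1), fun i => LinearMap.proj i ∘ₗ s ∘ₗ Q.projectionOnto Q' hQ,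
    Set.range_subset_iff.2 fun i => (π _).2, fun q hq => ?_⟩
  have hπ : Fintype.linearCombination R (fun i => π (Pi.single i 1)) = π := by
    ext i; simp [Fintype.linearCombination_apply_single]
  calc ∑ i, s (Q.projectionOnto Q' hQ q) i • (π (Pi.single i 1) : M)
      = (Fintype.linearCombination R (fun i => π (Pi.single i 1)) (s ⟨q, hq⟩) : M) := by
        simp [Submodule.projectionOnto_apply_left hQ ⟨q, hq⟩, Fintype.linearCombination_apply]
    _ = q := by rw [hπ, ← LinearMap.comp_apply, hπs, LinearMap.id_apply]

theorem forall_fg_exists_projective_summand_iff :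
    (∀ F : Submodule R M, F.FG → ∃ Q : Submodule R M, F ≤ Q ∧ Q.FG ∧
        Projective R Q ∧ ∃ Q' : Submodule R M, IsCompl Q Q') ↔
    ∀ N : Finset M, ∃ (k : ℕ) (u : Fin k → M) (f : Fin k → Dual R M),
      IsDualBasisOn u f N ∧ IsDualBasisOn u f (Set.range u) := by
  constructor
  · intro h N
    obtain ⟨Q, hNQ, hfg, hproj, Q', hQ⟩ := h _ (Submodule.fg_span N.finite_toSet)
    have : Module.Finite R Q := Module.Finite.iff_fg.2 hfg
    obtain ⟨k, u, f, hu, hf⟩ := exists_isDualBasisOn_of_isCompl R hQ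
    exact ⟨k, u, f, hf.mono (Submodule.subset_span.trans hNQ), hf.mono hu⟩
  · rintro h F ⟨N, rfl⟩
    obtain ⟨k, u, f, hN, hu⟩ := h N
    exact ⟨_, Submodule.span_le.2 hN.subset_span_range, Submodule.fg_span (Set.finite_range u),
      hu.projective_span_range, hu.exists_isCompl_span_range⟩

end Module

/-- For a right module `P` over a unital ring `A` (encoded as a module over `Aᵐᵒᵖ`),
the following are equivalent: (1) every finitely generated submodule of `P` is
contained in a finitely generated projective submodule which is a direct summand
of `P`; (2) every finite subset of `P` admits an idempotent dual basis
`{(uᵢ, fᵢ)} ⊆ P × Hom_A(P,A)`. -/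
theorem stmt6 (A P : Type) [Ring A] [AddCommGroup P] [Module Aᵐᵒᵖ P] :
    (∀ F : Submodule Aᵐᵒᵖ P, F.FG → ∃ Q : Submodule Aᵐᵒᵖ P, F ≤ Q ∧ Q.FG ∧
        Module.Projective Aᵐᵒᵖ Q ∧ ∃ Q' : Submodule Aᵐᵒᵖ P, IsCompl Q Q') ↔
    (∀ N : Finset P, ∃ (k : ℕ) (u : Fin k → P) (f : Fin k → (P →ₗ[Aᵐᵒᵖ] A)),
        (∀ n ∈ N, ∑ i, op (f i n) • u i = n) ∧
        (∀ i, ∑ j, op (f j (u i)) • u j = u i)) := by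
  rw [Module.forall_fg_exists_projective_summand_iff]
  simp only [Module.IsDualBasisOn, Set.forall_mem_range, Finset.mem_coe]
  -- `op` identifies `Hom_A(P, A)` with `Module.Dual Aᵐᵒᵖ P`, and both conditions are then `rfl`.
  let e : A ≃ₗ[Aᵐᵒᵖ] Aᵐᵒᵖ := opLinearEquiv Aᵐᵒᵖ
  refine forall_congr' fun N => exists_congr fun k => exists_congr fun u =>
    ⟨fun ⟨f, hf⟩ => ⟨fun i => e.symm.toLinearMap ∘ₗ f i, hf⟩,
      fun ⟨f, hf⟩ => ⟨fun i => e.toLinearMap ∘ₗ f i, hf⟩⟩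
end

section
/- Let (M, M', μ) be a dual pair over unital rings A, B, with elementary ring S = M ⊗_A M'. If there exists an element Σ u'_i ⊗ u_i ∈ M' ⊗_B M, commuting with all elements of A, such that μ(Σ u'_i ⊗ u_i) = 1_A, then M is a firm left S-module, i.e., the multiplication map S ⊗_S M → M is an isomorphism. -/
/-!
With `e = Σ u'ᵢ ⊗ uᵢ` and `μ e = 1`, the map `m ↦ Σ (m ⊗ u'ᵢ) ⊗ uᵢ` is inverse to the
multiplication `S ⊗_S M → M`. One composite sends `m` to `m · μ e = m`. For the other, the
universal property of `S = M ⊗_A M'` gives `(s · m) ⊗ x = s (m ⊗ x)` in `S`, so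
`Σ (s · m ⊗ u'ᵢ) ⊗ uᵢ = Σ s ⊗ (m ⊗ u'ᵢ) · uᵢ = s ⊗ m · μ e = s ⊗ m`.
-/

open MulOpposite

/-- Relations defining the tensor product `M' ⊗_B M`. -/
def relMM' (B M M' : Type) [Ring B] [AddCommGroup M] [Module B M]
    [AddCommGroup M'] [Module Bᵐᵒᵖ M'] :
    AddSubgroup (FreeAbelianGroup (M' × M)) :=
  AddSubgroup.closure
    ({z | ∃ x y m, z = FreeAbelianGroup.of (x + y, m) - FreeAbelianGroup.of (x, m)
        - FreeAbelianGroup.of (y, m)} ∪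
     {z | ∃ x m n, z = FreeAbelianGroup.of (x, m + n) - FreeAbelianGroup.of (x, m)
        - FreeAbelianGroup.of (x, n)} ∪
     {z | ∃ (x : M') (b : B) (m : M), z = FreeAbelianGroup.of (op b • x, m) - FreeAbelianGroup.of (x, b • m)})

/-- Relations defining the tensor product `S ⊗_S M` for the (non-unital) ring `S`
acting on `M` by `act`. -/
def relSM (S M : Type) [AddCommGroup S] [AddCommGroup M]
    (mul : S → S → S) (act : S → M → M) :
    AddSubgroup (FreeAbelianGroup (S × M)) :=
  AddSubgroup.closure
    ({z | ∃ s s' m, z = FreeAbelianGroup.of (s + s', m) - FreeAbelianGroup.of (s, m)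
        - FreeAbelianGroup.of (s', m)} ∪
     {z | ∃ s m n, z = FreeAbelianGroup.of (s, m + n) - FreeAbelianGroup.of (s, m)
        - FreeAbelianGroup.of (s, n)} ∪
     {z | ∃ s s' m, z = FreeAbelianGroup.of (mul s s', m) - FreeAbelianGroup.of (s, act s' m)})

namespace relSM

variable {S M : Type} [AddCommGroup S] [AddCommGroup M] {mul : S → S → S} {act : S → M → M}

variable (mul act) in
abbrev tmul (s : S) (m : M) : FreeAbelianGroup (S × M) ⧸ relSM S M mul act :=
  QuotientAddGroup.mk (FreeAbelianGroup.of (s, m))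

theorem tmul_add_left (s s' : S) (m : M) :
    tmul mul act (s + s') m = tmul mul act s m + tmul mul act s' m := by
  rw [← QuotientAddGroup.mk_add, QuotientAddGroup.eq_iff_sub_mem, ← sub_sub]
  exact AddSubgroup.subset_closure (.inl (.inl ⟨s, s', m, rfl⟩))

theorem tmul_add_right (s : S) (m n : M) :
    tmul mul act s (m + n) = tmul mul act s m + tmul mul act s n := by
  rw [← QuotientAddGroup.mk_add, QuotientAddGroup.eq_iff_sub_mem, ← sub_sub]
  exact AddSubgroup.subset_closure (.inl (.inr ⟨s, m, n, rfl⟩))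

theorem tmul_mul (s s' : S) (m : M) : tmul mul act (mul s s') m = tmul mul act s (act s' m) :=
  QuotientAddGroup.eq_iff_sub_mem.2 (AddSubgroup.subset_closure (.inr ⟨s, s', m, rfl⟩))

theorem tmul_sum {ι : Type} (I : Finset ι) (s : S) (f : ι → M) :
    tmul mul act s (∑ i ∈ I, f i) = ∑ i ∈ I, tmul mul act s (f i) :=
  map_sum (AddMonoidHom.mk' (tmul mul act s) (tmul_add_right s)) f I

def lift {X : Type} [AddCommGroup X] (f : S → M → X)
    (hl : ∀ s s' m, f (s + s') m = f s m + f s' m) (hr : ∀ s m n, f s (m + n) = f s m + f s n)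
    (hb : ∀ s s' m, f (mul s s') m = f s (act s' m)) :
    (FreeAbelianGroup (S × M) ⧸ relSM S M mul act) →+ X :=
  QuotientAddGroup.lift _ (FreeAbelianGroup.lift fun p => f p.1 p.2) <| by
    refine (AddSubgroup.closure_le _).2 ?_
    rintro _ ((⟨s, s', m, rfl⟩ | ⟨s, m, n, rfl⟩) | ⟨s, s', m, rfl⟩) <;>
      simp [AddMonoidHom.mem_ker, hl, hr, hb]

@[simp]
theorem lift_tmul {X : Type} [AddCommGroup X] (f : S → M → X) hl hr hb (s : S) (m : M) :
    lift (mul := mul) (act := act) f hl hr hb (tmul mul act s m) = f s m :=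
  FreeAbelianGroup.lift_apply_of _ _

theorem hom_ext {X : Type} [AddCommGroup X]
    {φ ψ : (FreeAbelianGroup (S × M) ⧸ relSM S M mul act) →+ X}
    (h : ∀ s m, φ (tmul mul act s m) = ψ (tmul mul act s m)) : φ = ψ :=
  QuotientAddGroup.addMonoidHom_ext _ <| FreeAbelianGroup.lift_ext _ _ fun p => h p.1 p.2

end relSM

section DualPair

variable {A M M' S : Type} [AddCommGroup M]

theorem addMonoidHom_ext_of_univ [AddCommGroup M'] [AddCommGroup S] [SMul Aᵐᵒᵖ M] [SMul A M']
    {t : M → M' → S}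
    (t_addl : ∀ m n x, t (m + n) x = t m x + t n x)
    (t_addr : ∀ m x y, t m (x + y) = t m x + t m y)
    (t_bal : ∀ m (a : A) x, t (op a • m) x = t m (a • x))
    (t_univ : ∀ (X : Type) [AddCommGroup X] (g : M → M' → X),
        (∀ m n x, g (m + n) x = g m x + g n x) →
        (∀ m x y, g m (x + y) = g m x + g m y) →
        (∀ m (a : A) x, g (op a • m) x = g m (a • x)) →
        ∃! φ : S →+ X, ∀ m x, φ (t m x) = g m x)
    {X : Type} [AddCommGroup X] {φ ψ : S →+ X} (h : ∀ m x, φ (t m x) = ψ (t m x)) :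
    φ = ψ := by
  obtain ⟨χ, -, hχ⟩ := t_univ X (fun m x => φ (t m x))
    (by simp [t_addl]) (by simp [t_addr]) (by simp [t_bal])
  exact (hχ φ fun _ _ => rfl).trans (hχ ψ fun m x => (h m x).symm).symm

theorem t_act_eq_mul [AddCommGroup M'] [AddCommGroup S] [SMul Aᵐᵒᵖ M] [SMul A M']
    {μ : M' → M → A} {t : M → M' → S}
    (t_addl : ∀ m n x, t (m + n) x = t m x + t n x)
    (t_addr : ∀ m x y, t m (x + y) = t m x + t m y)
    (t_bal : ∀ m (a : A) x, t (op a • m) x = t m (a • x))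
    (t_univ : ∀ (X : Type) [AddCommGroup X] (g : M → M' → X),
        (∀ m n x, g (m + n) x = g m x + g n x) →
        (∀ m x y, g m (x + y) = g m x + g m y) →
        (∀ m (a : A) x, g (op a • m) x = g m (a • x)) →
        ∃! φ : S →+ X, ∀ m x, φ (t m x) = g m x)
    {mul : S → S → S} (mul_addl : ∀ s s' s'' : S, mul (s + s') s'' = mul s s'' + mul s' s'')
    (mul_def : ∀ m x n y, mul (t m x) (t n y) = t (op (μ x n) • m) y)
    {act : S → M → M} (act_addl : ∀ s s' m, act (s + s') m = act s m + act s' m)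
    (act_def : ∀ m x n, act (t m x) n = op (μ x n) • m) (s : S) (m : M) (x : M') :
    t (act s m) x = mul s (t m x) := by
  let lhs : S →+ S := AddMonoidHom.mk' (fun s => t (act s m) x) fun _ _ => by
    rw [act_addl, t_addl]
  let rhs : S →+ S := AddMonoidHom.mk' (fun s => mul s (t m x)) fun _ _ => mul_addl _ _ _
  have : lhs = rhs := addMonoidHom_ext_of_univ t_addl t_addr t_bal t_univ fun n y => by
    simp [lhs, rhs, act_def, mul_def]
  exact DFunLike.congr_fun this s

theorem sum_act_t_eq_self [Ring A] [Module Aᵐᵒᵖ M] {μ : M' → M → A} {t : M → M' → S}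
    {act : S → M → M} (act_def : ∀ m x n, act (t m x) n = op (μ x n) • m)
    {k : ℕ} {u' : Fin k → M'} {u : Fin k → M} (hunit : ∑ i, μ (u' i) (u i) = 1) (m : M) :
    ∑ i, act (t m (u' i)) (u i) = m := by
  simp only [act_def, ← Finset.sum_smul, ← Finset.op_sum, hunit, op_one, one_smul]

end DualPair

theorem stmt8_general (A M M' S : Type) [Ring A]
    [AddCommGroup M] [Module Aᵐᵒᵖ M]
    [AddCommGroup M'] [Module A M']
    [AddCommGroup S]
    (μ : M' → M → A)
    (t : M → M' → S)
    (t_addl : ∀ m n x, t (m + n) x = t m x + t n x)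
    (t_addr : ∀ m x y, t m (x + y) = t m x + t m y)
    (t_bal : ∀ m (a : A) x, t (op a • m) x = t m (a • x))
    (t_univ : ∀ (X : Type) [AddCommGroup X] (g : M → M' → X),
        (∀ m n x, g (m + n) x = g m x + g n x) →
        (∀ m x y, g m (x + y) = g m x + g m y) →
        (∀ m (a : A) x, g (op a • m) x = g m (a • x)) →
        ∃! φ : S →+ X, ∀ m x, φ (t m x) = g m x)
    (mul : S → S → S)
    (mul_addl : ∀ s s' s'' : S, mul (s + s') s'' = mul s s'' + mul s' s'')
    (mul_def : ∀ m x n y, mul (t m x) (t n y) = t (op (μ x n) • m) y)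
    -- the left action of S on M
    (act : S → M → M)
    (act_addl : ∀ s s' m, act (s + s') m = act s m + act s' m)
    (act_addr : ∀ s m n, act s (m + n) = act s m + act s n)
    (act_def : ∀ m x n, act (t m x) n = op (μ x n) • m)
    (act_mul : ∀ s s' m, act (mul s s') m = act s (act s' m))
    -- the element Σ u'ᵢ ⊗ uᵢ ∈ (M' ⊗_B M)^A with μ(Σ u'ᵢ ⊗ uᵢ) = 1
    (k : ℕ) (u' : Fin k → M') (u : Fin k → M)
    (hunit : ∑ i, μ (u' i) (u i) = 1) :
    -- M is a firm left S-module : S ⊗_S M → M is an isomorphism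
    ∃ φ : (FreeAbelianGroup (S × M) ⧸ relSM S M mul act) →+ M,
      (∀ s m, φ (QuotientAddGroup.mk (FreeAbelianGroup.of (s, m))) = act s m) ∧
      Function.Bijective φ := by
  let φ := relSM.lift act act_addl act_addr act_mul
  let β : M →+ FreeAbelianGroup (S × M) ⧸ relSM S M mul act :=
    AddMonoidHom.mk' (fun m => ∑ i, relSM.tmul mul act (t m (u' i)) (u i)) fun m n => by
      simp only [t_addl, relSM.tmul_add_left, Finset.sum_add_distrib]
  have hφβ : ∀ m, φ (β m) = m := fun m => by
    simp [φ, β, sum_act_t_eq_self act_def hunit]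
  have hβφ : β.comp φ = AddMonoidHom.id _ := relSM.hom_ext fun s m => by
    simp [φ, β, t_act_eq_mul t_addl t_addr t_bal t_univ mul_addl mul_def act_addl act_def,
      relSM.tmul_mul, ← relSM.tmul_sum, sum_act_t_eq_self act_def hunit]
  exact ⟨φ, relSM.lift_tmul act act_addl act_addr act_mul,
    Function.bijective_iff_has_inverse.2 ⟨β, DFunLike.congr_fun hβφ, hφβ⟩⟩

/-- If a dual pair `(M, M', μ)` admits an element `Σ u'ᵢ ⊗ uᵢ ∈ (M' ⊗_B M)^A` with
`μ(Σ u'ᵢ ⊗ uᵢ) = 1_A`, then `M` is a firm left module over the elementary ring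
`S = M ⊗_A M'`, i.e. `S ⊗_S M → M` is bijective. -/
theorem stmt8 (A B M M' S : Type) [Ring A] [Ring B]
    [AddCommGroup M] [Module B M] [Module Aᵐᵒᵖ M] [SMulCommClass B Aᵐᵒᵖ M]
    [AddCommGroup M'] [Module A M'] [Module Bᵐᵒᵖ M'] [SMulCommClass A Bᵐᵒᵖ M']
    [AddCommGroup S]
    (μ : M' → M → A)
    (μ_addl : ∀ x y m, μ (x + y) m = μ x m + μ y m)
    (μ_addr : ∀ x m n, μ x (m + n) = μ x m + μ x n)
    (μ_bal : ∀ x (b : B) m, μ (op b • x) m = μ x (b • m))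
    (μ_linl : ∀ (a : A) x m, μ (a • x) m = a * μ x m)
    (μ_linr : ∀ x m (a : A), μ x (op a • m) = μ x m * a)
    (t : M → M' → S)
    (t_addl : ∀ m n x, t (m + n) x = t m x + t n x)
    (t_addr : ∀ m x y, t m (x + y) = t m x + t m y)
    (t_bal : ∀ m (a : A) x, t (op a • m) x = t m (a • x))
    (t_univ : ∀ (X : Type) [AddCommGroup X] (g : M → M' → X),
        (∀ m n x, g (m + n) x = g m x + g n x) →
        (∀ m x y, g m (x + y) = g m x + g m y) →
        (∀ m (a : A) x, g (op a • m) x = g m (a • x)) →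
        ∃! φ : S →+ X, ∀ m x, φ (t m x) = g m x)
    (mul : S → S → S)
    (mul_addl : ∀ s s' s'' : S, mul (s + s') s'' = mul s s'' + mul s' s'')
    (mul_addr : ∀ s s' s'' : S, mul s (s' + s'') = mul s s' + mul s s'')
    (mul_def : ∀ m x n y, mul (t m x) (t n y) = t (op (μ x n) • m) y)
    -- the left action of S on M
    (act : S → M → M)
    (act_addl : ∀ s s' m, act (s + s') m = act s m + act s' m)
    (act_addr : ∀ s m n, act s (m + n) = act s m + act s n)
    (act_def : ∀ m x n, act (t m x) n = op (μ x n) • m)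
    (act_mul : ∀ s s' m, act (mul s s') m = act s (act s' m))
    -- the element Σ u'ᵢ ⊗ uᵢ ∈ (M' ⊗_B M)^A with μ(Σ u'ᵢ ⊗ uᵢ) = 1
    (k : ℕ) (u' : Fin k → M') (u : Fin k → M)
    (hcentral : ∀ a : A,
        (∑ i, (QuotientAddGroup.mk (FreeAbelianGroup.of (a • u' i, u i)) :
            FreeAbelianGroup (M' × M) ⧸ relMM' B M M')) =
        ∑ i, (QuotientAddGroup.mk (FreeAbelianGroup.of (u' i, op a • u i)) :
            FreeAbelianGroup (M' × M) ⧸ relMM' B M M'))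
    (hunit : ∑ i, μ (u' i) (u i) = 1) :
    -- M is a firm left S-module : S ⊗_S M → M is an isomorphism
    ∃ φ : (FreeAbelianGroup (S × M) ⧸ relSM S M mul act) →+ M,
      (∀ s m, φ (QuotientAddGroup.mk (FreeAbelianGroup.of (s, m))) = act s m) ∧
      Function.Bijective φ :=
  stmt8_general A M M' S μ t t_addl t_addr t_bal t_univ mul mul_addl mul_def act act_addl act_addr
    act_def act_mul k u' u hunit
end

section
/- Let (M, M', μ) be a dual pair over unital rings A, B, and suppose the elementary ring S = M ⊗_A M' has a unit element e and M, M' are firm respectively as left and right S-modules. Then M is finitely generated projective as a right A-module and the map φ : M' → Hom_A(M, A), φ(m')(m) = μ(m' ⊗ m), is bijective. -/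
open MulOpposite

/-- Relations defining `N ⊗_S S` for a right action `act'` of `S` on `N`. -/
def relNS (S N : Type) [AddCommGroup S] [AddCommGroup N]
    (mul : S → S → S) (act' : N → S → N) :
    AddSubgroup (FreeAbelianGroup (N × S)) :=
  AddSubgroup.closure
    ({z | ∃ y y' s, z = FreeAbelianGroup.of (y + y', s) - FreeAbelianGroup.of (y, s)
        - FreeAbelianGroup.of (y', s)} ∪
     {z | ∃ y s s', z = FreeAbelianGroup.of (y, s + s') - FreeAbelianGroup.of (y, s)
        - FreeAbelianGroup.of (y, s')} ∪
     {z | ∃ y s s', z = FreeAbelianGroup.of (act' y s, s') - FreeAbelianGroup.of (y, mul s s')})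

/-!
Every element of `S` is a sum of elementary tensors, so `e = ∑ t (b i) (x i)`. Firmness makes
`e` act as the identity on `M` and on `M'` (each of their elements is a sum of `s • m`, and
`e s = s`), which gives the dual basis identities `m = ∑ b i · μ (x i) m` and
`y = ∑ μ y (b i) • x i`. The first exhibits `M` as a direct summand of `Aⁿ`; the second makes
`φ` injective, and every `f : Hom_A(M, A)` equals `φ (∑ f (b i) • x i)`.
-/

theorem Module.Finite.of_dual_basis {R M ι : Type*} [Ring R] [AddCommGroup M] [Module R M]
    [Fintype ι] (b : ι → M) (f : ι → M →ₗ[R] R) (hbf : ∀ m, ∑ i, f i m • b i = m) :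
    Module.Finite R M :=
  Module.Finite.of_surjective (Fintype.linearCombination R b)
    fun m => ⟨fun i => f i m, by simp [Fintype.linearCombination_apply, hbf]⟩

theorem Module.Projective.of_dual_basis {R M ι : Type*} [Ring R] [AddCommGroup M] [Module R M]
    [Fintype ι] (b : ι → M) (f : ι → M →ₗ[R] R) (hbf : ∀ m, ∑ i, f i m • b i = m) :
    Module.Projective R M :=
  Module.Projective.of_split (LinearMap.pi f) (Fintype.linearCombination R b)
    (LinearMap.ext fun m => by simp [Fintype.linearCombination_apply, hbf])

theorem map_sum_of_map_add {ι α β : Type*} [AddCommGroup α] [AddCommGroup β] (f : α → β)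
    (hf : ∀ a b, f (a + b) = f a + f b) (s : Finset ι) (g : ι → α) :
    f (∑ i ∈ s, g i) = ∑ i ∈ s, f (g i) :=
  map_sum (AddMonoidHom.mk' f hf) g s

theorem AddMonoidHom.apply_eq_self_of_fixes_generators {X M : Type*} [AddCommGroup M]
    {N : AddSubgroup (FreeAbelianGroup X)} (φ : FreeAbelianGroup X ⧸ N →+ M)
    (hφ : Function.Surjective φ) (h : M →+ M)
    (hfix : ∀ x, h (φ (QuotientAddGroup.mk (FreeAbelianGroup.of x))) =
      φ (QuotientAddGroup.mk (FreeAbelianGroup.of x)))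
    (m : M) : h m = m := by
  obtain ⟨q, rfl⟩ := hφ m
  have hcomp : h.comp φ = φ :=
    QuotientAddGroup.addMonoidHom_ext _ (FreeAbelianGroup.lift_ext _ _ hfix)
  exact DFunLike.congr_fun hcomp q

theorem exists_sum_eq_of_forall_hom_eq_zero {M M' S : Type} [AddCommGroup M] [AddCommGroup S]
    (t : M → M' → S) (t_addl : ∀ m n x, t (m + n) x = t m x + t n x)
    (hzero : ∀ (X : Type) [AddCommGroup X] (φ : S →+ X), (∀ m x, φ (t m x) = 0) → φ = 0)
    (s : S) : ∃ (n : ℕ) (b : Fin n → M) (x : Fin n → M'), ∑ i, t (b i) (x i) = s := by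
  set H := AddSubgroup.closure (Set.range (Function.uncurry t))
  have hH : H = ⊤ := by
    have hmk := hzero _ (QuotientAddGroup.mk' H) fun m x =>
      (QuotientAddGroup.eq_zero_iff _).2 (AddSubgroup.subset_closure ⟨(m, x), rfl⟩)
    rw [← QuotientAddGroup.ker_mk' H, hmk, AddMonoidHom.ker_zero]
  have hs : s ∈ H := hH ▸ AddSubgroup.mem_top s
  induction hs using AddSubgroup.closure_induction with
  | mem _ hmem =>
    obtain ⟨⟨m, x⟩, rfl⟩ := hmem
    exact ⟨1, fun _ => m, fun _ => x, by simp⟩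
  | zero => exact ⟨0, Fin.elim0, Fin.elim0, by simp⟩
  | add _ _ _ _ ih ih' =>
    obtain ⟨n, b, x, rfl⟩ := ih
    obtain ⟨n', b', x', rfl⟩ := ih'
    exact ⟨n + n', Fin.append b b', Fin.append x x', by simp [Fin.sum_univ_add]⟩
  | neg _ _ ih =>
    obtain ⟨n, b, x, rfl⟩ := ih
    refine ⟨n, fun i => -b i, x, ?_⟩
    rw [← Finset.sum_neg_distrib]
    exact Finset.sum_congr rfl fun i _ =>
      (AddMonoidHom.mk' (t · (x i)) (t_addl · · (x i))).map_neg (b i)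

section Pairing

variable {A M M' : Type*} [Ring A] [AddCommGroup M] [Module Aᵐᵒᵖ M]

def pairingOp (μ : M' → M → A) (μ_addr : ∀ x m n, μ x (m + n) = μ x m + μ x n)
    (μ_linr : ∀ x m (a : A), μ x (op a • m) = μ x m * a) (y : M') :
    M →ₗ[Aᵐᵒᵖ] Aᵐᵒᵖ where
  toFun m := op (μ y m)
  map_add' m n := by rw [μ_addr, op_add]
  map_smul' a m := by rw [← op_unop a, μ_linr]; rfl

theorem exists_pairing_eq_of_sum_smul_eq {ι : Type*} [Fintype ι] [AddCommGroup M'] [Module A M']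
    (μ : M' → M → A) (μ_addl : ∀ x y m, μ (x + y) m = μ x m + μ y m)
    (μ_linl : ∀ (a : A) x m, μ (a • x) m = a * μ x m) (b : ι → M) (x : ι → M')
    (hbx : ∀ m, ∑ i, op (μ (x i) m) • b i = m) (f : M →ₗ[Aᵐᵒᵖ] A) :
    ∃ y : M', ∀ m, f m = μ y m := by
  refine ⟨∑ i, f (b i) • x i, fun m => ?_⟩
  calc f m = ∑ i, f (b i) * μ (x i) m := by
        conv_lhs => rw [← hbx m]
        simp
    _ = μ (∑ i, f (b i) • x i) m := by
        rw [map_sum_of_map_add (μ · m) (μ_addl · · m)]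
        simp only [μ_linl]

end Pairing

theorem pairing_injective_of_sum_smul_eq {ι A M M' : Type*} [Fintype ι] [Semiring A]
    [AddCommMonoid M'] [Module A M'] (μ : M' → M → A) (b : ι → M) (x : ι → M')
    (hbx : ∀ y, ∑ i, μ y (b i) • x i = y) : Function.Injective (fun y m => μ y m) := by
  intro y y' hyy'
  rw [← hbx y, ← hbx y']
  simp only [fun m => congrFun hyy' m]

theorem stmt9_general (A M M' S : Type) [Ring A]
    [AddCommGroup M] [Module Aᵐᵒᵖ M]
    [AddCommGroup M'] [Module A M']
    [AddCommGroup S]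
    (μ : M' → M → A)
    (μ_addl : ∀ x y m, μ (x + y) m = μ x m + μ y m)
    (μ_addr : ∀ x m n, μ x (m + n) = μ x m + μ x n)
    (μ_linl : ∀ (a : A) x m, μ (a • x) m = a * μ x m)
    (μ_linr : ∀ x m (a : A), μ x (op a • m) = μ x m * a)
    (t : M → M' → S)
    (t_addl : ∀ m n x, t (m + n) x = t m x + t n x)
    (t_univ : ∀ (X : Type) [AddCommGroup X] (g : M → M' → X),
        (∀ m n x, g (m + n) x = g m x + g n x) →
        (∀ m x y, g m (x + y) = g m x + g m y) →
        (∀ m (a : A) x, g (op a • m) x = g m (a • x)) →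
        ∃! φ : S →+ X, ∀ m x, φ (t m x) = g m x)
    (mul : S → S → S)
    -- the left action of S on M and the right action of S on M'
    (act : S → M → M)
    (act_addl : ∀ s s' m, act (s + s') m = act s m + act s' m)
    (act_addr : ∀ s m n, act s (m + n) = act s m + act s n)
    (act_def : ∀ m x n, act (t m x) n = op (μ x n) • m)
    (act_mul : ∀ s s' m, act (mul s s') m = act s (act s' m))
    (act' : M' → S → M')
    (act'_addl : ∀ y y' s, act' (y + y') s = act' y s + act' y' s)
    (act'_addr : ∀ y s s', act' y (s + s') = act' y s + act' y s')
    (act'_def : ∀ y m x, act' y (t m x) = μ y m • x)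
    (act'_mul : ∀ y s s', act' y (mul s s') = act' (act' y s) s')
    -- S has a unit element e
    (e : S) (he : ∀ s : S, mul e s = s ∧ mul s e = s)
    -- M is a firm left S-module
    (hfirmM : ∃ φ : (FreeAbelianGroup (S × M) ⧸ relSM S M mul act) →+ M,
        (∀ s m, φ (QuotientAddGroup.mk (FreeAbelianGroup.of (s, m))) = act s m) ∧
        Function.Bijective φ)
    -- M' is a firm right S-module
    (hfirmM' : ∃ φ : (FreeAbelianGroup (M' × S) ⧸ relNS S M' mul act') →+ M',
        (∀ y s, φ (QuotientAddGroup.mk (FreeAbelianGroup.of (y, s))) = act' y s) ∧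
        Function.Bijective φ) :
    -- M is finitely generated projective as a right A-module,
    Module.Finite Aᵐᵒᵖ M ∧ Module.Projective Aᵐᵒᵖ M ∧
    -- and φ : M' → Hom_A(M, A) is bijective
    Function.Injective (fun (x : M') (m : M) => μ x m) ∧
    (∀ f : M →ₗ[Aᵐᵒᵖ] A, ∃ x : M', ∀ m : M, f m = μ x m) := by
  obtain ⟨n, b, x, he_sum⟩ := exists_sum_eq_of_forall_hom_eq_zero t t_addl
    (fun X _ φ hφ => (t_univ X (fun _ _ => 0) (by simp) (by simp) (by simp)).unique hφ
      fun _ _ => rfl) e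
  obtain ⟨φM, hφM, hbijM⟩ := hfirmM
  obtain ⟨φM', hφM', hbijM'⟩ := hfirmM'
  have hunitM : ∀ m, act e m = m := AddMonoidHom.apply_eq_self_of_fixes_generators φM hbijM.2
    (AddMonoidHom.mk' (act e) (act_addr e)) fun p => by
      simp only [AddMonoidHom.mk'_apply, hφM, ← act_mul, (he _).1]
  have hunitM' : ∀ y, act' y e = y := AddMonoidHom.apply_eq_self_of_fixes_generators φM' hbijM'.2
    (AddMonoidHom.mk' (act' · e) (act'_addl · · e)) fun p => by
      simp only [AddMonoidHom.mk'_apply, hφM', ← act'_mul, (he _).2]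
  have hbx : ∀ m, ∑ i, op (μ (x i) m) • b i = m := fun m => by
    simpa only [act_def, he_sum, hunitM] using
      (map_sum_of_map_add (act · m) (act_addl · · m) Finset.univ fun i => t (b i) (x i)).symm
  have hxb : ∀ y, ∑ i, μ y (b i) • x i = y := fun y => by
    simpa only [act'_def, he_sum, hunitM'] using
      (map_sum_of_map_add (act' y) (act'_addr y) Finset.univ fun i => t (b i) (x i)).symm
  have hdual : ∀ m, ∑ i, pairingOp μ μ_addr μ_linr (x i) m • b i = m := hbx
  exact ⟨.of_dual_basis b _ hdual, .of_dual_basis b _ hdual,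
    pairing_injective_of_sum_smul_eq μ b x hxb,
    exists_pairing_eq_of_sum_smul_eq μ μ_addl μ_linl b x hbx⟩

/-- If the elementary ring `S = M ⊗_A M'` of a dual pair `(M, M', μ)` has a unit
element `e`, and `M`, `M'` are firm as left resp. right `S`-modules, then `M` is
finitely generated projective as a right `A`-module and
`φ : M' → Hom_A(M, A)`, `φ(m')(m) = μ(m' ⊗ m)`, is bijective. -/
theorem stmt9 (A B M M' S : Type) [Ring A] [Ring B]
    [AddCommGroup M] [Module B M] [Module Aᵐᵒᵖ M] [SMulCommClass B Aᵐᵒᵖ M]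
    [AddCommGroup M'] [Module A M'] [Module Bᵐᵒᵖ M'] [SMulCommClass A Bᵐᵒᵖ M']
    [AddCommGroup S]
    (μ : M' → M → A)
    (μ_addl : ∀ x y m, μ (x + y) m = μ x m + μ y m)
    (μ_addr : ∀ x m n, μ x (m + n) = μ x m + μ x n)
    (μ_bal : ∀ x (b : B) m, μ (op b • x) m = μ x (b • m))
    (μ_linl : ∀ (a : A) x m, μ (a • x) m = a * μ x m)
    (μ_linr : ∀ x m (a : A), μ x (op a • m) = μ x m * a)
    (t : M → M' → S)
    (t_addl : ∀ m n x, t (m + n) x = t m x + t n x)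
    (t_addr : ∀ m x y, t m (x + y) = t m x + t m y)
    (t_bal : ∀ m (a : A) x, t (op a • m) x = t m (a • x))
    (t_univ : ∀ (X : Type) [AddCommGroup X] (g : M → M' → X),
        (∀ m n x, g (m + n) x = g m x + g n x) →
        (∀ m x y, g m (x + y) = g m x + g m y) →
        (∀ m (a : A) x, g (op a • m) x = g m (a • x)) →
        ∃! φ : S →+ X, ∀ m x, φ (t m x) = g m x)
    (mul : S → S → S)
    (mul_addl : ∀ s s' s'' : S, mul (s + s') s'' = mul s s'' + mul s' s'')
    (mul_addr : ∀ s s' s'' : S, mul s (s' + s'') = mul s s' + mul s s'')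
    (mul_def : ∀ m x n y, mul (t m x) (t n y) = t (op (μ x n) • m) y)
    -- the left action of S on M and the right action of S on M'
    (act : S → M → M)
    (act_addl : ∀ s s' m, act (s + s') m = act s m + act s' m)
    (act_addr : ∀ s m n, act s (m + n) = act s m + act s n)
    (act_def : ∀ m x n, act (t m x) n = op (μ x n) • m)
    (act_mul : ∀ s s' m, act (mul s s') m = act s (act s' m))
    (act' : M' → S → M')
    (act'_addl : ∀ y y' s, act' (y + y') s = act' y s + act' y' s)
    (act'_addr : ∀ y s s', act' y (s + s') = act' y s + act' y s')
    (act'_def : ∀ y m x, act' y (t m x) = μ y m • x)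
    (act'_mul : ∀ y s s', act' y (mul s s') = act' (act' y s) s')
    -- S has a unit element e
    (e : S) (he : ∀ s : S, mul e s = s ∧ mul s e = s)
    -- M is a firm left S-module
    (hfirmM : ∃ φ : (FreeAbelianGroup (S × M) ⧸ relSM S M mul act) →+ M,
        (∀ s m, φ (QuotientAddGroup.mk (FreeAbelianGroup.of (s, m))) = act s m) ∧
        Function.Bijective φ)
    -- M' is a firm right S-module
    (hfirmM' : ∃ φ : (FreeAbelianGroup (M' × S) ⧸ relNS S M' mul act') →+ M',
        (∀ y s, φ (QuotientAddGroup.mk (FreeAbelianGroup.of (y, s))) = act' y s) ∧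
        Function.Bijective φ) :
    -- M is finitely generated projective as a right A-module,
    Module.Finite Aᵐᵒᵖ M ∧ Module.Projective Aᵐᵒᵖ M ∧
    -- and φ : M' → Hom_A(M, A) is bijective
    Function.Injective (fun (x : M') (m : M) => μ x m) ∧
    (∀ f : M →ₗ[Aᵐᵒᵖ] A, ∃ x : M', ∀ m : M, f m = μ x m) :=
  stmt9_general A M M' S μ μ_addl μ_addr μ_linl μ_linr t t_addl t_univ mul act act_addl act_addr
    act_def act_mul act' act'_addl act'_addr act'_def act'_mul e he hfirmM hfirmM'
end

section
/- Let B be a unital ring, R a B-bimodule and η : B → R a B-bimodule map with e = η(1). Suppose there is an associative B-bimodule multiplication μ on R which is a right η-multiplication on t ∈ R (i.e., μ(t ⊗ e) = t) and an associative multiplication μ' which is a left η-multiplication on s ∈ R (μ'(e ⊗ s) = s), such that μ and μ' associate. Then μ''(r ⊗ r') := μ(r ⊗ r') + μ'(r ⊗ r') − μ'(μ(r ⊗ e) ⊗ r') is an associative multiplication on R which is a right η-multiplication on t and a left η-multiplication on s. -/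
open MulOpposite

/-- Let `B` be a unital ring, `R` a `B`-bimodule and `η : B → R` a `B`-bimodule
map with `e = η(1)`.  If `μ` is an associative multiplication on `R` which is a
right `η`-multiplication on `t` (`μ(t ⊗ e) = t`) and `μ'` an associative
multiplication which is a left `η`-multiplication on `s` (`μ'(e ⊗ s) = s`), and
`μ`, `μ'` associate, then `μ''(r ⊗ r') = μ(r ⊗ r') + μ'(r ⊗ r') − μ'(μ(r ⊗ e) ⊗ r')`
is an associative multiplication which is a right `η`-multiplication on `t` and a
left `η`-multiplication on `s`. -/
theorem stmt19 (B R : Type) [Ring B] [AddCommGroup R]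
    [Module B R] [Module Bᵐᵒᵖ R] [SMulCommClass B Bᵐᵒᵖ R]
    (η : B → R)
    (η_add : ∀ b b', η (b + b') = η b + η b')
    (η_linl : ∀ b b', η (b * b') = b • η b')
    (η_linr : ∀ b b', η (b * b') = op b' • η b)
    (μ μ' : R → R → R)
    -- μ is an associative B-bimodule map R ⊗_B R → R
    (μ_addl : ∀ r r' r'', μ (r + r') r'' = μ r r'' + μ r' r'')
    (μ_addr : ∀ r r' r'', μ r (r' + r'') = μ r r' + μ r r'')
    (μ_bal : ∀ r (b : B) r', μ (op b • r) r' = μ r (b • r'))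
    (μ_linl : ∀ (b : B) r r', μ (b • r) r' = b • μ r r')
    (μ_linr : ∀ r r' (b : B), μ r (op b • r') = op b • μ r r')
    (μ_assoc : ∀ r r' r'', μ (μ r r') r'' = μ r (μ r' r''))
    -- μ' is an associative B-bimodule map R ⊗_B R → R
    (μ'_addl : ∀ r r' r'', μ' (r + r') r'' = μ' r r'' + μ' r' r'')
    (μ'_addr : ∀ r r' r'', μ' r (r' + r'') = μ' r r' + μ' r r'')
    (μ'_bal : ∀ r (b : B) r', μ' (op b • r) r' = μ' r (b • r'))
    (μ'_linl : ∀ (b : B) r r', μ' (b • r) r' = b • μ' r r')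
    (μ'_linr : ∀ r r' (b : B), μ' r (op b • r') = op b • μ' r r')
    (μ'_assoc : ∀ r r' r'', μ' (μ' r r') r'' = μ' r (μ' r' r''))
    -- μ and μ' associate
    (hassoc1 : ∀ r r' r'', μ r (μ' r' r'') = μ' (μ r r') r'')
    (hassoc2 : ∀ r r' r'', μ' r (μ r' r'') = μ (μ' r r') r'')
    -- μ is a right η-multiplication on t, μ' a left η-multiplication on s
    (t s : R)
    (ht : μ t (η 1) = t)
    (hs : μ' (η 1) s = s) :
    -- μ''(r ⊗ r') = μ(r ⊗ r') + μ'(r ⊗ r') − μ'(μ(r ⊗ e) ⊗ r') works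
    (∀ r r' r'' : R,
        (fun x y => μ x y + μ' x y - μ' (μ x (η 1)) y) ((fun x y => μ x y + μ' x y - μ' (μ x (η 1)) y) r r') r'' =
        (fun x y => μ x y + μ' x y - μ' (μ x (η 1)) y) r ((fun x y => μ x y + μ' x y - μ' (μ x (η 1)) y) r' r'')) ∧
    (∀ r r' r'' : R, (fun x y => μ x y + μ' x y - μ' (μ x (η 1)) y) (r + r') r'' =
        (fun x y => μ x y + μ' x y - μ' (μ x (η 1)) y) r r'' + (fun x y => μ x y + μ' x y - μ' (μ x (η 1)) y) r' r'') ∧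
    (∀ r r' r'' : R, (fun x y => μ x y + μ' x y - μ' (μ x (η 1)) y) r (r' + r'') =
        (fun x y => μ x y + μ' x y - μ' (μ x (η 1)) y) r r' + (fun x y => μ x y + μ' x y - μ' (μ x (η 1)) y) r r'') ∧
    (∀ (r : R) (b : B) (r' : R), (fun x y => μ x y + μ' x y - μ' (μ x (η 1)) y) (op b • r) r' =
        (fun x y => μ x y + μ' x y - μ' (μ x (η 1)) y) r (b • r')) ∧
    (∀ (b : B) (r r' : R), (fun x y => μ x y + μ' x y - μ' (μ x (η 1)) y) (b • r) r' =
        b • (fun x y => μ x y + μ' x y - μ' (μ x (η 1)) y) r r') ∧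
    (∀ (r r' : R) (b : B), (fun x y => μ x y + μ' x y - μ' (μ x (η 1)) y) r (op b • r') =
        op b • (fun x y => μ x y + μ' x y - μ' (μ x (η 1)) y) r r') ∧
    (fun x y => μ x y + μ' x y - μ' (μ x (η 1)) y) t (η 1) = t ∧
    (fun x y => μ x y + μ' x y - μ' (μ x (η 1)) y) (η 1) s = s := by
  have μ_subl : ∀ r r' r'', μ (r - r') r'' = μ r r'' - μ r' r'' := fun r r' r'' =>
    (AddMonoidHom.mk' (fun x => μ x r'') (fun a b => μ_addl a b r'')).map_sub r r'
  have μ_subr : ∀ r r' r'', μ r (r' - r'') = μ r r' - μ r r'' := fun r r' r'' =>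
    (AddMonoidHom.mk' (fun x => μ r x) (fun a b => μ_addr r a b)).map_sub r' r''
  have μ'_subl : ∀ r r' r'', μ' (r - r') r'' = μ' r r'' - μ' r' r'' := fun r r' r'' =>
    (AddMonoidHom.mk' (fun x => μ' x r'') (fun a b => μ'_addl a b r'')).map_sub r r'
  have μ'_subr : ∀ r r' r'', μ' r (r' - r'') = μ' r r' - μ' r r'' := fun r r' r'' =>
    (AddMonoidHom.mk' (fun x => μ' r x) (fun a b => μ'_addr r a b)).map_sub r' r''
  have hassoc1' : ∀ r r' r'', μ' (μ r r') r'' = μ r (μ' r' r'') :=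
    fun r r' r'' => (hassoc1 r r' r'').symm
  have hassoc2' : ∀ r r' r'', μ (μ' r r') r'' = μ' r (μ r' r'') :=
    fun r r' r'' => (hassoc2 r r' r'').symm
  have hbe : ∀ b : B, b • η 1 = op b • η 1 := fun b => by
    rw [← η_linl b 1, mul_one, ← η_linr 1 b, one_mul]
  refine ⟨?_, ?_, ?_, ?_, ?_, ?_, ?_, ?_⟩
  · intro x y z
    simp only [μ_subl, μ_addl, μ_subr, μ_addr, μ'_subl, μ'_addl, μ'_subr, μ'_addr,
      μ_assoc, μ'_assoc, hassoc1', hassoc2']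
    abel
  · intro r r' r''
    simp only [μ_addl, μ'_addl]
    abel
  · intro r r' r''
    simp only [μ_addr, μ'_addr]
    abel
  · intro r b r'
    simp only [μ_bal, μ'_bal, hbe, μ_linr, μ'_bal]
  · intro b r r'
    simp only [μ_linl, μ'_linl, smul_sub, smul_add]
  · intro r r' b
    simp only [μ_linr, μ'_linr, smul_sub, smul_add]
  · simp only [ht, hs]
    abel
  · simp only []
    rw [← hassoc1, hs]
    abel
end
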